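/- arXiv:2404.07136 — 5 statements merged into one kernel-verified Lean document; each statement's English description precedes it below -/
import Mathlib

section
/- For every dimension d ≥ 1 and every a ∈ ℝ^d, ∫_{ℝ^d} (cos(⟨t,a⟩) + sin(⟨t,a⟩)) exp(-‖t‖²/2) φ(t) dt = 2^{-d/2} exp(-‖a‖²/4). -/
open MeasureTheory Real

/-- Density of the `d`-variate standard normal distribution,
`φ(t) = (2π)^{-d/2} exp(-‖t‖²/2)`, with `‖t‖² = ∑ i, t i ^ 2`. -/
noncomputable def gaussDensity (d : ℕ) (t : Fin d → ℝ) : ℝ :=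
  (2 * π) ^ (-(d : ℝ) / 2) * Real.exp (-(∑ i, t i ^ 2) / 2)

private lemma bhep_F_prod (d : ℕ) (a t : Fin d → ℝ) :
    Complex.exp (-1 * ∑ i, (t i : ℂ) ^ 2 + ∑ i, (Complex.I * a i) * t i)
      = ∏ i, Complex.exp ((-1 : ℂ) * (t i : ℂ) ^ 2 + (Complex.I * a i) * (t i : ℂ) + 0) := by
  rw [← Complex.exp_sum]
  congr 1
  simp [Finset.sum_add_distrib, neg_one_mul, Finset.sum_neg_distrib]

private lemma bhep_F_integrable (d : ℕ) (a : Fin d → ℝ) :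
    Integrable (fun t : Fin d → ℝ ↦
      Complex.exp (-1 * ∑ i, (t i : ℂ) ^ 2 + ∑ i, (Complex.I * a i) * t i)) := by
  have : Integrable (fun t : Fin d → ℝ ↦
      ∏ i, Complex.exp ((-1 : ℂ) * (t i : ℂ) ^ 2 + (Complex.I * a i) * (t i : ℂ) + 0)) :=
    Integrable.fintype_prod fun i ↦
      integrable_cexp_quadratic' (by norm_num) (Complex.I * a i) 0
  exact this.congr (Filter.Eventually.of_forall fun t ↦ (bhep_F_prod d a t).symm)

private lemma bhep_F_integral (d : ℕ) (a : Fin d → ℝ) :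
    (∫ t : Fin d → ℝ,
        Complex.exp (-1 * ∑ i, (t i : ℂ) ^ 2 + ∑ i, (Complex.I * a i) * t i))
      = (π : ℂ) ^ ((d : ℂ) / 2) * Complex.exp (-(∑ i, a i ^ 2) / 4) := by
  rw [GaussianFourier.integral_cexp_neg_mul_sum_add (by norm_num) (fun i ↦ Complex.I * a i)]
  congr 1
  · norm_num [Fintype.card_fin]
  · congr 1
    have h : ∑ i, (Complex.I * a i) ^ 2 = -(∑ i, (a i : ℂ) ^ 2) := by
      rw [← Finset.sum_neg_distrib]
      refine Finset.sum_congr rfl fun i _ ↦ ?_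
      rw [mul_pow, Complex.I_sq]; ring
    rw [h]
    push_cast
    ring

private lemma bhep_pointwise (d : ℕ) (a t : Fin d → ℝ) :
    (Real.cos (∑ i, t i * a i) + Real.sin (∑ i, t i * a i))
        * Real.exp (-(∑ i, t i ^ 2) / 2) * gaussDensity d t
      = (2 * π) ^ (-(d : ℝ) / 2) *
        ((1 - Complex.I)
          * Complex.exp (-1 * ∑ i, (t i : ℂ) ^ 2 + ∑ i, (Complex.I * a i) * t i)).re := by
  set z : ℂ := -1 * ∑ i, (t i : ℂ) ^ 2 + ∑ i, (Complex.I * a i) * t i with hz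
  have hre : z.re = -∑ i, t i ^ 2 := by
    simp [hz, Complex.add_re, Complex.mul_re, ← Complex.ofReal_pow]
  have him : z.im = ∑ i, t i * a i := by
    simp [hz, Complex.add_im, Complex.mul_im, mul_comm, ← Complex.ofReal_pow]
  have h1 : ((1 - Complex.I) * Complex.exp z).re
      = (Complex.exp z).re + (Complex.exp z).im := by
    simp [Complex.sub_re, Complex.sub_im, Complex.mul_re, Complex.mul_im]
  rw [h1, Complex.exp_re, Complex.exp_im, hre, him]
  have hE : rexp (-∑ i, t i ^ 2)
      = rexp (-(∑ i, t i ^ 2) / 2) * rexp (-(∑ i, t i ^ 2) / 2) := by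
    rw [← Real.exp_add]; ring_nf
  rw [gaussDensity, hE]
  ring

set_option maxHeartbeats 800000 in
/-- For every dimension `d ≥ 1` and every `a ∈ ℝ^d`,
`∫ (cos⟨t,a⟩ + sin⟨t,a⟩) exp(-‖t‖²/2) φ(t) dt = 2^{-d/2} exp(-‖a‖²/4)`. -/
theorem bhep_cross_term_integral (d : ℕ) (hd : 1 ≤ d) (a : Fin d → ℝ) :
    (∫ t : Fin d → ℝ,
        (Real.cos (∑ i, t i * a i) + Real.sin (∑ i, t i * a i))
          * Real.exp (-(∑ i, t i ^ 2) / 2) * gaussDensity d t)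
      = (2 : ℝ) ^ (-(d : ℝ) / 2) * Real.exp (-(∑ i, a i ^ 2) / 4) := by
  have hπ : (0 : ℝ) < π := Real.pi_pos
  simp_rw [bhep_pointwise d a]
  rw [integral_const_mul]
  simp_rw [← RCLike.re_eq_complex_re]
  rw [integral_re ((bhep_F_integrable d a).const_mul (1 - Complex.I))]
  rw [MeasureTheory.integral_const_mul, bhep_F_integral d a, RCLike.re_eq_complex_re]
  -- compute the real part
  have hcast : (π : ℂ) ^ ((d : ℂ) / 2) = ((π ^ ((d : ℝ) / 2) : ℝ) : ℂ) := by
    rw [Complex.ofReal_cpow hπ.le]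
    norm_num
  have hexp : (-(((∑ i, a i ^ 2 : ℝ)) : ℂ) / 4) = ((-(∑ i, a i ^ 2) / 4 : ℝ) : ℂ) := by
    push_cast; ring
  rw [hcast, hexp, ← Complex.ofReal_exp]
  have : ((1 - Complex.I) * (((π ^ ((d : ℝ) / 2) : ℝ) : ℂ)
      * ((Real.exp (-(∑ i, a i ^ 2) / 4) : ℝ) : ℂ))).re
      = π ^ ((d : ℝ) / 2) * Real.exp (-(∑ i, a i ^ 2) / 4) := by
    rw [← Complex.ofReal_mul, Complex.mul_re, Complex.ofReal_re, Complex.ofReal_im]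
    simp only [Complex.sub_re, Complex.one_re, Complex.I_re, Complex.sub_im, Complex.one_im,
      Complex.I_im, mul_zero, sub_zero, zero_sub, one_mul]
  rw [this]
  rw [Real.mul_rpow (by norm_num) hπ.le]
  rw [← mul_assoc, mul_assoc ((2:ℝ) ^ (-(d:ℝ)/2)), ← Real.rpow_add hπ]
  have hone : (-(d:ℝ)/2 + (d:ℝ)/2) = 0 := by ring
  rw [hone, Real.rpow_zero, mul_one]
end

section
/- Let d ≥ 1, let Σ be a positive definite real d×d matrix, let μ ∈ ℝ^d, and let C denote the positive definite square root of Σ^{-1}. Define g(x,t) = cos(⟨t, C(x-μ)⟩) + sin(⟨t, C(x-μ)⟩) - exp(-‖t‖²/2). Then for all x₁, x₂ ∈ ℝ^d, ∫_{ℝ^d} g(x₁,t) g(x₂,t) φ(t) dt = exp(-(1/2)(x₁-x₂)ᵀΣ^{-1}(x₁-x₂)) - 2^{-d/2} exp(-(1/4)(x₁-μ)ᵀΣ^{-1}(x₁-μ)) - 2^{-d/2} exp(-(1/4)(x₂-μ)ᵀΣ^{-1}(x₂-μ)) + 3^{-d/2}. -/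
open MeasureTheory Real Matrix

/-- The BHEP integrand `g(x,t) = cos⟨t, C(x-μ)⟩ + sin⟨t, C(x-μ)⟩ - exp(-‖t‖²/2)`,
where `C = Σ^{-1/2}`. -/
noncomputable def bhepG (d : ℕ) (C : Matrix (Fin d) (Fin d) ℝ) (μ : Fin d → ℝ)
    (x t : Fin d → ℝ) : ℝ :=
  Real.cos (∑ i, t i * (C *ᵥ (x - μ)) i) + Real.sin (∑ i, t i * (C *ᵥ (x - μ)) i)
    - Real.exp (-(∑ i, t i ^ 2) / 2)

lemma bhep_aux_complex (d : ℕ) (s : ℝ) (hs : 0 < s) (w : Fin d → ℝ) :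
    (∫ t : Fin d → ℝ, Complex.exp (-(s:ℂ) * ∑ i, (t i : ℂ) ^ 2 + ∑ i, (Complex.I * w i) * t i))
      = ((π / s) ^ ((d:ℝ) / 2) * Real.exp (-(∑ i, w i ^ 2) / (4 * s)) : ℝ) := by
  have hs' : 0 < (s:ℂ).re := by simpa using hs
  rw [GaussianFourier.integral_cexp_neg_mul_sum_add hs' (fun i ↦ Complex.I * w i)]
  have h1 : ((π:ℂ) / s) ^ ((Fintype.card (Fin d)) / 2 : ℂ)
      = (((π / s) ^ ((d:ℝ) / 2) : ℝ) : ℂ) := by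
    rw [Complex.ofReal_cpow (by positivity)]
    push_cast
    simp
  have h2 : (∑ i, (Complex.I * w i) ^ 2) / (4 * (s:ℂ))
      = ((-(∑ i, w i ^ 2) / (4 * s) : ℝ) : ℂ) := by
    have : (∑ i, (Complex.I * (w i:ℂ)) ^ 2) = -((∑ i, w i ^ 2 : ℝ) : ℂ) := by
      push_cast
      rw [← Finset.sum_neg_distrib]
      exact Finset.sum_congr rfl fun i _ ↦ by rw [mul_pow, Complex.I_sq]; ring
    rw [this]
    push_cast
    ring
  rw [h1, h2, ← Complex.ofReal_exp, ← Complex.ofReal_mul]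

lemma bhep_exp_eq (d : ℕ) (s : ℝ) (w : Fin d → ℝ) (t : Fin d → ℝ) :
    Complex.exp (-(s:ℂ) * ∑ i, (t i : ℂ) ^ 2 + ∑ i, (Complex.I * w i) * t i)
      = ((Real.exp (-s * ∑ i, t i ^ 2) : ℝ) : ℂ)
        * Complex.exp (((∑ i, t i * w i : ℝ) : ℂ) * Complex.I) := by
  have hz : (-(s:ℂ) * ∑ i, (t i : ℂ) ^ 2 + ∑ i, (Complex.I * w i) * t i)
      = ((-s * ∑ i, t i ^ 2 : ℝ) : ℂ) + ((∑ i, t i * w i : ℝ) : ℂ) * Complex.I := by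
    push_cast
    rw [Finset.sum_mul]
    have : ∀ i : Fin d, Complex.I * (w i : ℂ) * (t i : ℂ) = (t i : ℂ) * (w i : ℂ) * Complex.I :=
      fun i ↦ by ring
    rw [Finset.sum_congr rfl fun i _ ↦ this i]
  rw [hz, Complex.exp_add, ← Complex.ofReal_exp]

lemma bhep_int_cos (d : ℕ) (s : ℝ) (hs : 0 < s) (w : Fin d → ℝ) :
    Integrable (fun t : Fin d → ℝ ↦
      Real.exp (-s * ∑ i, t i ^ 2) * Real.cos (∑ i, t i * w i)) := by
  have hs' : 0 < (s:ℂ).re := by simpa using hs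
  have h := (GaussianFourier.integrable_cexp_neg_mul_sum_add (ι := Fin d) hs'
    (fun i ↦ Complex.I * w i)).re
  convert h using 2 with t
  rw [bhep_exp_eq, RCLike.re_to_complex, Complex.re_ofReal_mul, Complex.exp_ofReal_mul_I_re]

lemma bhep_int_sin (d : ℕ) (s : ℝ) (hs : 0 < s) (w : Fin d → ℝ) :
    Integrable (fun t : Fin d → ℝ ↦
      Real.exp (-s * ∑ i, t i ^ 2) * Real.sin (∑ i, t i * w i)) := by
  have hs' : 0 < (s:ℂ).re := by simpa using hs
  have h := (GaussianFourier.integrable_cexp_neg_mul_sum_add (ι := Fin d) hs'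
    (fun i ↦ Complex.I * w i)).im
  convert h using 2 with t
  rw [bhep_exp_eq, RCLike.im_to_complex, Complex.im_ofReal_mul, Complex.exp_ofReal_mul_I_im]

lemma bhep_val_cos (d : ℕ) (s : ℝ) (hs : 0 < s) (w : Fin d → ℝ) :
    (∫ t : Fin d → ℝ, Real.exp (-s * ∑ i, t i ^ 2) * Real.cos (∑ i, t i * w i))
      = (π / s) ^ ((d:ℝ) / 2) * Real.exp (-(∑ i, w i ^ 2) / (4 * s)) := by
  have hs' : 0 < (s:ℂ).re := by simpa using hs
  have hint := GaussianFourier.integrable_cexp_neg_mul_sum_add (ι := Fin d) hs'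
    (fun i ↦ Complex.I * w i)
  have h := integral_re hint
  simp_rw [bhep_exp_eq d s w, RCLike.re_to_complex, Complex.re_ofReal_mul,
    Complex.exp_ofReal_mul_I_re] at h
  rw [h]
  simp_rw [← bhep_exp_eq d s w]
  rw [bhep_aux_complex d s hs w, Complex.ofReal_re]

lemma bhep_val_sin (d : ℕ) (s : ℝ) (hs : 0 < s) (w : Fin d → ℝ) :
    (∫ t : Fin d → ℝ, Real.exp (-s * ∑ i, t i ^ 2) * Real.sin (∑ i, t i * w i)) = 0 := by
  have hs' : 0 < (s:ℂ).re := by simpa using hs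
  have hint := GaussianFourier.integrable_cexp_neg_mul_sum_add (ι := Fin d) hs'
    (fun i ↦ Complex.I * w i)
  have h := integral_im hint
  simp_rw [bhep_exp_eq d s w, RCLike.im_to_complex, Complex.im_ofReal_mul,
    Complex.exp_ofReal_mul_I_im] at h
  rw [h]
  simp_rw [← bhep_exp_eq d s w]
  rw [bhep_aux_complex d s hs w, Complex.ofReal_im]

lemma bhep_expand (a b q K : ℝ) :
    (Real.cos a + Real.sin a - Real.exp (-q / 2)) * (Real.cos b + Real.sin b - Real.exp (-q / 2))
      * (K * Real.exp (-q / 2))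
    = K * (Real.exp (-(1/2:ℝ) * q) * Real.cos (a - b) + Real.exp (-(1/2:ℝ) * q) * Real.sin (a + b)
        - Real.exp (-(1:ℝ) * q) * Real.cos a - Real.exp (-(1:ℝ) * q) * Real.sin a
        - Real.exp (-(1:ℝ) * q) * Real.cos b - Real.exp (-(1:ℝ) * q) * Real.sin b
        + Real.exp (-(3/2:ℝ) * q)) := by
  have e1 : Real.exp (-(1:ℝ) * q) = Real.exp (-q / 2) * Real.exp (-q / 2) := by
    rw [← Real.exp_add]; ring_nf
  have e3 : Real.exp (-(3/2:ℝ) * q)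
      = Real.exp (-q / 2) * Real.exp (-q / 2) * Real.exp (-q / 2) := by
    rw [← Real.exp_add, ← Real.exp_add]; ring_nf
  have e2 : Real.exp (-(1/2:ℝ) * q) = Real.exp (-q / 2) := by ring_nf
  rw [Real.cos_sub, Real.sin_add, e1, e2, e3]
  ring

lemma bhep_int_exp (d : ℕ) (s : ℝ) (hs : 0 < s) :
    Integrable (fun t : Fin d → ℝ ↦ Real.exp (-s * ∑ i, t i ^ 2)) := by
  simpa using bhep_int_cos d s hs 0

lemma bhep_val_exp (d : ℕ) (s : ℝ) (hs : 0 < s) :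
    (∫ t : Fin d → ℝ, Real.exp (-s * ∑ i, t i ^ 2)) = (π / s) ^ ((d:ℝ) / 2) := by
  simpa using bhep_val_cos d s hs 0

lemma bhep_integral_split {α : Type*} [MeasurableSpace α] {μ : Measure α}
    {f1 f2 f3 f4 f5 f6 f7 : α → ℝ} (h1 : Integrable f1 μ) (h2 : Integrable f2 μ)
    (h3 : Integrable f3 μ) (h4 : Integrable f4 μ) (h5 : Integrable f5 μ)
    (h6 : Integrable f6 μ) (h7 : Integrable f7 μ) :
    ∫ a, (f1 a + f2 a - f3 a - f4 a - f5 a - f6 a + f7 a) ∂μ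
      = (∫ a, f1 a ∂μ) + (∫ a, f2 a ∂μ) - (∫ a, f3 a ∂μ) - (∫ a, f4 a ∂μ)
        - (∫ a, f5 a ∂μ) - (∫ a, f6 a ∂μ) + (∫ a, f7 a ∂μ) := by
  have g2 : Integrable (fun a ↦ f1 a + f2 a) μ := h1.add h2
  have g3 : Integrable (fun a ↦ f1 a + f2 a - f3 a) μ := g2.sub h3
  have g4 : Integrable (fun a ↦ f1 a + f2 a - f3 a - f4 a) μ := g3.sub h4
  have g5 : Integrable (fun a ↦ f1 a + f2 a - f3 a - f4 a - f5 a) μ := g4.sub h5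
  have g6 : Integrable (fun a ↦ f1 a + f2 a - f3 a - f4 a - f5 a - f6 a) μ := g5.sub h6
  rw [integral_add g6 h7, integral_sub g5 h6, integral_sub g4 h5, integral_sub g3 h4,
    integral_sub g2 h3, integral_add h1 h2]

/-- Closed form of the BHEP kernel: if `Σ` is positive definite, `μ ∈ ℝ^d`, and `C` is the
positive definite square root of `Σ⁻¹`, then
`∫ g(x₁,t) g(x₂,t) φ(t) dt = exp(-(1/2)(x₁-x₂)ᵀΣ⁻¹(x₁-x₂))
  - 2^{-d/2} exp(-(1/4)(x₁-μ)ᵀΣ⁻¹(x₁-μ)) - 2^{-d/2} exp(-(1/4)(x₂-μ)ᵀΣ⁻¹(x₂-μ)) + 3^{-d/2}`. -/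
theorem bhep_kernel_closed_form (d : ℕ) (hd : 1 ≤ d)
    (S : Matrix (Fin d) (Fin d) ℝ) (hS : S.PosDef) (μ : Fin d → ℝ)
    (C : Matrix (Fin d) (Fin d) ℝ) (hC : C.PosDef) (hCsq : C * C = S⁻¹)
    (x₁ x₂ : Fin d → ℝ) :
    (∫ t : Fin d → ℝ, bhepG d C μ x₁ t * bhepG d C μ x₂ t * gaussDensity d t)
      = Real.exp (-(1 / 2) * ((x₁ - x₂) ⬝ᵥ (S⁻¹ *ᵥ (x₁ - x₂))))
        - (2 : ℝ) ^ (-(d : ℝ) / 2) * Real.exp (-(1 / 4) * ((x₁ - μ) ⬝ᵥ (S⁻¹ *ᵥ (x₁ - μ))))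
        - (2 : ℝ) ^ (-(d : ℝ) / 2) * Real.exp (-(1 / 4) * ((x₂ - μ) ⬝ᵥ (S⁻¹ *ᵥ (x₂ - μ))))
        + (3 : ℝ) ^ (-(d : ℝ) / 2) := by
  have hCt : Cᵀ = C := by
    have h := hC.isHermitian
    rwa [Matrix.IsHermitian, Matrix.conjTranspose_eq_transpose_of_trivial] at h
  have hdot : ∀ v : Fin d → ℝ, v ⬝ᵥ (S⁻¹ *ᵥ v) = ∑ i, (C *ᵥ v) i ^ 2 := by
    intro v
    rw [← hCsq, ← Matrix.mulVec_mulVec, Matrix.dotProduct_mulVec, ← Matrix.mulVec_transpose, hCt]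
    simp [dotProduct, sq]
  have hy12 : C *ᵥ (x₁ - μ) - C *ᵥ (x₂ - μ) = C *ᵥ (x₁ - x₂) := by
    rw [← Matrix.mulVec_sub, sub_sub_sub_cancel_right]
  have hsub : ∀ t u v : Fin d → ℝ,
      (∑ i, t i * u i) - (∑ i, t i * v i) = ∑ i, t i * (u - v) i := by
    intro t u v
    rw [← Finset.sum_sub_distrib]
    exact Finset.sum_congr rfl fun i _ ↦ by simp [mul_sub]
  have hadd : ∀ t u v : Fin d → ℝ,
      (∑ i, t i * u i) + (∑ i, t i * v i) = ∑ i, t i * (u + v) i := by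
    intro t u v
    rw [← Finset.sum_add_distrib]
    exact Finset.sum_congr rfl fun i _ ↦ by simp [mul_add]
  have hpt : ∀ t : Fin d → ℝ,
      bhepG d C μ x₁ t * bhepG d C μ x₂ t * gaussDensity d t
      = (2 * π) ^ (-(d:ℝ)/2) *
        (Real.exp (-(1/2:ℝ) * ∑ i, t i ^ 2)
            * Real.cos (∑ i, t i * (C *ᵥ (x₁ - μ) - C *ᵥ (x₂ - μ)) i)
          + Real.exp (-(1/2:ℝ) * ∑ i, t i ^ 2)
            * Real.sin (∑ i, t i * (C *ᵥ (x₁ - μ) + C *ᵥ (x₂ - μ)) i)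
          - Real.exp (-(1:ℝ) * ∑ i, t i ^ 2) * Real.cos (∑ i, t i * (C *ᵥ (x₁ - μ)) i)
          - Real.exp (-(1:ℝ) * ∑ i, t i ^ 2) * Real.sin (∑ i, t i * (C *ᵥ (x₁ - μ)) i)
          - Real.exp (-(1:ℝ) * ∑ i, t i ^ 2) * Real.cos (∑ i, t i * (C *ᵥ (x₂ - μ)) i)
          - Real.exp (-(1:ℝ) * ∑ i, t i ^ 2) * Real.sin (∑ i, t i * (C *ᵥ (x₂ - μ)) i)
          + Real.exp (-(3/2:ℝ) * ∑ i, t i ^ 2)) := by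
    intro t
    simp only [bhepG, gaussDensity]
    rw [bhep_expand, hsub t _ _, hadd t _ _]
  simp only [hpt]
  rw [integral_const_mul]
  have i1 := bhep_int_cos d (1/2) (by norm_num) (C *ᵥ (x₁ - μ) - C *ᵥ (x₂ - μ))
  have i2 := bhep_int_sin d (1/2) (by norm_num) (C *ᵥ (x₁ - μ) + C *ᵥ (x₂ - μ))
  have i3 := bhep_int_cos d 1 one_pos (C *ᵥ (x₁ - μ))
  have i4 := bhep_int_sin d 1 one_pos (C *ᵥ (x₁ - μ))
  have i5 := bhep_int_cos d 1 one_pos (C *ᵥ (x₂ - μ))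
  have i6 := bhep_int_sin d 1 one_pos (C *ᵥ (x₂ - μ))
  have i7 := bhep_int_exp d (3/2) (by norm_num)
  rw [bhep_integral_split i1 i2 i3 i4 i5 i6 i7,
    bhep_val_cos d (1/2) (by norm_num) _,
    bhep_val_sin d (1/2) (by norm_num) _,
    bhep_val_cos d 1 one_pos _,
    bhep_val_sin d 1 one_pos _,
    bhep_val_cos d 1 one_pos _,
    bhep_val_sin d 1 one_pos _,
    bhep_val_exp d (3/2) (by norm_num), hy12,
    ← hdot (x₁ - x₂), ← hdot (x₁ - μ), ← hdot (x₂ - μ)]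
  rw [show (-((x₁ - x₂) ⬝ᵥ (S⁻¹ *ᵥ (x₁ - x₂))) / (4 * (1/2:ℝ)))
      = -(1 / 2) * ((x₁ - x₂) ⬝ᵥ (S⁻¹ *ᵥ (x₁ - x₂))) from by ring,
    show (-((x₁ - μ) ⬝ᵥ (S⁻¹ *ᵥ (x₁ - μ))) / (4 * (1:ℝ)))
      = -(1 / 4) * ((x₁ - μ) ⬝ᵥ (S⁻¹ *ᵥ (x₁ - μ))) from by ring,
    show (-((x₂ - μ) ⬝ᵥ (S⁻¹ *ᵥ (x₂ - μ))) / (4 * (1:ℝ)))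
      = -(1 / 4) * ((x₂ - μ) ⬝ᵥ (S⁻¹ *ᵥ (x₂ - μ))) from by ring]
  have h2pi : (0:ℝ) < 2 * π := by positivity
  have hzero : -(d:ℝ)/2 + (d:ℝ)/2 = 0 := by ring
  have hK1 : (2 * π) ^ (-(d:ℝ)/2) * (π / (1/2:ℝ)) ^ ((d:ℝ)/2) = 1 := by
    rw [show π / (1/2:ℝ) = 2 * π from by ring, ← Real.rpow_add h2pi, hzero, Real.rpow_zero]
  have hK2 : (2 * π) ^ (-(d:ℝ)/2) * (π / (1:ℝ)) ^ ((d:ℝ)/2) = (2:ℝ) ^ (-(d:ℝ)/2) := by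
    rw [div_one, Real.mul_rpow (by norm_num) pi_pos.le, mul_assoc, ← Real.rpow_add pi_pos,
      hzero, Real.rpow_zero, mul_one]
  have hK3 : (2 * π) ^ (-(d:ℝ)/2) * (π / (3/2:ℝ)) ^ ((d:ℝ)/2) = (3:ℝ) ^ (-(d:ℝ)/2) := by
    rw [show π / (3/2:ℝ) = 2 * π / 3 from by ring, Real.div_rpow h2pi.le (by norm_num)]
    have h1 : (2 * π) ^ (-(d:ℝ)/2) * (2 * π) ^ ((d:ℝ)/2) = 1 := by
      rw [← Real.rpow_add h2pi, hzero, Real.rpow_zero]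
    calc (2 * π) ^ (-(d:ℝ)/2) * ((2 * π) ^ ((d:ℝ)/2) / (3:ℝ) ^ ((d:ℝ)/2))
        = ((2 * π) ^ (-(d:ℝ)/2) * (2 * π) ^ ((d:ℝ)/2)) * ((3:ℝ) ^ ((d:ℝ)/2))⁻¹ := by ring
      _ = ((3:ℝ) ^ ((d:ℝ)/2))⁻¹ := by rw [h1, one_mul]
      _ = (3:ℝ) ^ (-(d:ℝ)/2) := by
          rw [show -(d:ℝ)/2 = -((d:ℝ)/2) from by ring, Real.rpow_neg (by norm_num)]
  linear_combination Real.exp (-(1 / 2) * ((x₁ - x₂) ⬝ᵥ (S⁻¹ *ᵥ (x₁ - x₂)))) * hK1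
    - Real.exp (-(1 / 4) * ((x₁ - μ) ⬝ᵥ (S⁻¹ *ᵥ (x₁ - μ)))) * hK2
    - Real.exp (-(1 / 4) * ((x₂ - μ) ⬝ᵥ (S⁻¹ *ᵥ (x₂ - μ)))) * hK2 + hK3
end

section
/- Let d ≥ 1, n ≥ 1 and y₁, …, y_n ∈ ℝ^d. Let ψ_n(t) = (1/n) Σ_{j=1}^n exp(i⟨t, y_j⟩) be their empirical characteristic function. Then n ∫_{ℝ^d} |ψ_n(t) - exp(-‖t‖²/2)|² φ(t) dt = (1/n) Σ_{j=1}^n Σ_{k=1}^n [ exp(-‖y_j - y_k‖²/2) - 2^{-d/2} exp(-‖y_j‖²/4) - 2^{-d/2} exp(-‖y_k‖²/4) + 3^{-d/2} ]. -/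
open MeasureTheory Real

noncomputable def gker (d : ℕ) (s : ℝ) (a : Fin d → ℝ) (t : Fin d → ℝ) : ℝ :=
  Real.cos (∑ i, t i * a i) *
    ((2 * π) ^ (-(d : ℝ) / 2) * Real.exp (-(s * ∑ i, t i ^ 2) / 2))

lemma gker_re (d : ℕ) (s : ℝ) (a : Fin d → ℝ) (t : Fin d → ℝ) :
    gker d s a t = (2 * π) ^ (-(d : ℝ) / 2) *
      (Complex.exp (-((s/2 : ℝ) : ℂ) * ∑ i, (t i : ℂ) ^ 2
          + ∑ i, ((a i : ℝ) : ℂ) * Complex.I * (t i : ℂ))).re := by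
  have h : (-((s/2 : ℝ) : ℂ) * ∑ i, (t i : ℂ) ^ 2 + ∑ i, ((a i : ℝ) : ℂ) * Complex.I * (t i : ℂ))
      = ((-(s * ∑ i, t i ^ 2) / 2 : ℝ) : ℂ) + ((∑ i, t i * a i : ℝ) : ℂ) * Complex.I := by
    have h1 : ((-(s * ∑ i, t i ^ 2) / 2 : ℝ) : ℂ) = -((s/2 : ℝ) : ℂ) * ∑ i, (t i : ℂ) ^ 2 := by
      push_cast; ring
    have h2 : ((∑ i, t i * a i : ℝ) : ℂ) * Complex.I
        = ∑ i, ((a i : ℝ) : ℂ) * Complex.I * (t i : ℂ) := by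
      push_cast
      rw [Finset.sum_mul]
      exact Finset.sum_congr rfl fun i _ => by ring
    rw [h1, h2]
  rw [h, Complex.exp_re]
  simp only [Complex.add_re, Complex.ofReal_re, Complex.mul_re, Complex.I_re, Complex.I_im,
    Complex.ofReal_im, Complex.add_im, Complex.mul_im]
  rw [gker]
  ring_nf

lemma exp_sum_eq (d : ℕ) (s : ℝ) (a : Fin d → ℝ) :
    (fun t : Fin d → ℝ => Complex.exp (-((s/2 : ℝ) : ℂ) * ∑ i, (t i : ℂ) ^ 2
        + ∑ i, ((a i : ℝ) : ℂ) * Complex.I * (t i : ℂ)))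
      = fun t : Fin d → ℝ =>
        ∏ i, Complex.exp (-((s/2 : ℝ) : ℂ) * (t i : ℂ) ^ 2
          + ((a i : ℝ) : ℂ) * Complex.I * (t i : ℂ)) := by
  funext t
  rw [← Complex.exp_sum, Finset.sum_add_distrib, Finset.mul_sum]

lemma integrable_cexpF (d : ℕ) {s : ℝ} (hs : 0 < s) (a : Fin d → ℝ) :
    Integrable (fun t : Fin d → ℝ =>
      Complex.exp (-((s/2 : ℝ) : ℂ) * ∑ i, (t i : ℂ) ^ 2
        + ∑ i, ((a i : ℝ) : ℂ) * Complex.I * (t i : ℂ))) := by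
  rw [exp_sum_eq]
  apply Integrable.fintype_prod (f := fun i (x : ℝ) =>
    Complex.exp (-((s/2 : ℝ) : ℂ) * (x : ℂ) ^ 2 + ((a i : ℝ) : ℂ) * Complex.I * (x : ℂ)))
  intro i
  have := integrable_cexp_quadratic' (b := -((s/2 : ℝ) : ℂ))
    (by simpa using by positivity : (-((s/2 : ℝ) : ℂ)).re < 0)
    (((a i : ℝ) : ℂ) * Complex.I) 0
  simpa using this

lemma integrable_gker (d : ℕ) {s : ℝ} (hs : 0 < s) (a : Fin d → ℝ) :
    Integrable (gker d s a) := by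
  have : gker d s a = fun t => (2 * π) ^ (-(d : ℝ) / 2) *
      (Complex.exp (-((s/2 : ℝ) : ℂ) * ∑ i, (t i : ℂ) ^ 2
        + ∑ i, ((a i : ℝ) : ℂ) * Complex.I * (t i : ℂ))).re := funext (gker_re d s a)
  rw [this]
  exact ((integrable_cexpF d hs a).re).const_mul _

lemma integral_gker (d : ℕ) {s : ℝ} (hs : 0 < s) (a : Fin d → ℝ) :
    ∫ t : Fin d → ℝ, gker d s a t
      = s ^ (-(d : ℝ) / 2) * Real.exp (-(∑ i, a i ^ 2) / (2 * s)) := by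
  have hb : (0:ℝ) < (((s/2 : ℝ) : ℂ)).re := by simpa using half_pos hs
  have hF := integrable_cexpF d hs a
  have hval : (∫ t : Fin d → ℝ, Complex.exp (-((s/2 : ℝ) : ℂ) * ∑ i, (t i : ℂ) ^ 2
        + ∑ i, ((a i : ℝ) : ℂ) * Complex.I * (t i : ℂ)))
      = (((π / (s/2)) ^ ((d : ℝ) / 2) * Real.exp (-(∑ i, a i ^ 2) / (2 * s)) : ℝ) : ℂ) := by
    rw [GaussianFourier.integral_cexp_neg_mul_sum_add hb (fun i => ((a i : ℝ) : ℂ) * Complex.I)]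
    have hc : (∑ i, (((a i : ℝ) : ℂ) * Complex.I) ^ 2) = ((-(∑ i, a i ^ 2) : ℝ) : ℂ) := by
      push_cast
      rw [← Finset.sum_neg_distrib]
      exact Finset.sum_congr rfl fun i _ => by rw [mul_pow, Complex.I_sq]; ring
    rw [hc]
    have h4 : (4 : ℂ) * ((s/2 : ℝ) : ℂ) = ((2 * s : ℝ) : ℂ) := by push_cast; ring
    rw [h4]
    push_cast [Complex.ofReal_cpow (show (0:ℝ) ≤ π / (s/2) by positivity), Complex.ofReal_exp,
      Fintype.card_fin]
    norm_num
  simp_rw [gker_re d s a]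
  rw [MeasureTheory.integral_const_mul]
  simp_rw [← RCLike.re_to_complex]
  rw [integral_re hF]
  rw [RCLike.re_to_complex, hval, Complex.ofReal_re]
  rw [← mul_assoc]
  congr 1
  rw [div_div_eq_mul_div, Real.div_rpow (by positivity) hs.le,
    neg_div, Real.rpow_neg (by positivity : (0:ℝ) ≤ 2 * π),
    Real.rpow_neg hs.le]
  rw [show π * 2 = 2 * π by ring]
  field_simp

lemma double_sum_eval {n : ℕ} (a b : Fin n → ℝ) (u m p : ℝ) :
    ∑ j, ∑ k, (a j * a k * u + b j * b k * u - a j * m - a k * m + p)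
      = (∑ j, a j) * (∑ j, a j) * u + (∑ j, b j) * (∑ j, b j) * u
        - (n : ℝ) * (∑ j, a j) * m - (n : ℝ) * (∑ j, a j) * m + (n : ℝ) * (n : ℝ) * p := by
  simp only [Finset.sum_add_distrib, Finset.sum_sub_distrib, Finset.sum_const,
    Finset.card_univ, Fintype.card_fin, nsmul_eq_mul, ← Finset.sum_mul, ← Finset.mul_sum]
  rw [Finset.sum_mul_sum, Finset.sum_mul_sum]
  ring

lemma cexp_I_real (x : ℝ) :
    Complex.exp (Complex.I * (x : ℂ)) = ((Real.cos x : ℝ) : ℂ) + ((Real.sin x : ℝ) : ℂ) * Complex.I := by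
  rw [mul_comm]
  apply Complex.ext
  · simp [Complex.exp_ofReal_mul_I_re, Complex.cos_ofReal_re]
  · simp [Complex.exp_ofReal_mul_I_im, Complex.sin_ofReal_re]

lemma pointwise_expand (d n : ℕ) (hn : 1 ≤ n) (y : Fin n → Fin d → ℝ) (t : Fin d → ℝ) :
    (‖((1 / (n : ℂ)) * ∑ j, Complex.exp (Complex.I * ((∑ i, t i * y j i : ℝ) : ℂ))
        - ((Real.exp (-(∑ i, t i ^ 2) / 2) : ℝ) : ℂ))‖) ^ 2 * gaussDensity d t
      = (1 / (n : ℝ)^2) * ∑ j, ∑ k,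
          (gker d 1 (fun i => y j i - y k i) t - gker d 2 (y j) t - gker d 2 (y k) t
            + gker d 3 (fun _ => 0) t) := by
  have hn' : (n : ℝ) ≠ 0 := by positivity
  set θ : Fin n → ℝ := fun j => ∑ i, t i * y j i with hθ
  set E : ℝ := ∑ i, t i ^ 2 with hE
  set g : ℝ := Real.exp (-E / 2) with hg
  set K : ℝ := (2 * π) ^ (-(d : ℝ) / 2) with hK
  set C : ℝ := ∑ j, Real.cos (θ j) with hC
  set S : ℝ := ∑ j, Real.sin (θ j) with hS
  -- LHS
  have hw : (1 / (n : ℂ)) * ∑ j, Complex.exp (Complex.I * ((θ j : ℝ) : ℂ))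
      - ((g : ℝ) : ℂ)
      = (((C / n - g : ℝ)) : ℂ) + (((S / n : ℝ)) : ℂ) * Complex.I := by
    simp_rw [cexp_I_real]
    rw [Finset.sum_add_distrib, ← Finset.sum_mul, ← Complex.ofReal_sum, ← Complex.ofReal_sum,
      ← hC, ← hS]
    push_cast
    ring
  rw [hw, Complex.sq_norm, Complex.normSq_add_mul_I]
  -- RHS summands
  have hker1 : ∀ j k, gker d 1 (fun i => y j i - y k i) t
      = (Real.cos (θ j) * Real.cos (θ k) + Real.sin (θ j) * Real.sin (θ k)) * (K * g) := by
    intro j k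
    rw [gker]
    have harg : ∑ i, t i * (y j i - y k i) = θ j - θ k := by
      simp_rw [mul_sub]; rw [Finset.sum_sub_distrib]
    rw [harg, Real.cos_sub, ← hK, hg, hE]
    ring_nf
  have hker2 : ∀ j, gker d 2 (y j) t = Real.cos (θ j) * (K * (g * g)) := by
    intro j
    rw [gker, ← hK, hg, hE, ← Real.exp_add]
    ring_nf
    simp only [hθ]
    ring
  have hker3 : gker d 3 (fun _ => 0) t = K * (g * (g * g)) := by
    rw [gker, ← hK, hg, hE]
    simp only [mul_zero, Finset.sum_const_zero, Real.cos_zero, one_mul]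
    rw [← Real.exp_add, ← Real.exp_add]
    ring_nf
  simp_rw [hker1, hker2, hker3]
  have : ∀ j k : Fin n,
      (Real.cos (θ j) * Real.cos (θ k) + Real.sin (θ j) * Real.sin (θ k)) * (K * g)
        - Real.cos (θ j) * (K * (g * g)) - Real.cos (θ k) * (K * (g * g)) + K * (g * (g * g))
      = Real.cos (θ j) * Real.cos (θ k) * (K * g) + Real.sin (θ j) * Real.sin (θ k) * (K * g)
        - Real.cos (θ j) * (K * g * g) - Real.cos (θ k) * (K * g * g) + K * g * g * g := by
    intro j k; ring
  simp_rw [this]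
  rw [double_sum_eval (fun j => Real.cos (θ j)) (fun j => Real.sin (θ j)) (K * g)
    (K * g * g) (K * g * g * g), ← hC, ← hS]
  simp only [gaussDensity]
  rw [← hE, ← hg, ← hK]
  field_simp
  ring

/-- V-statistic representation of the BHEP statistic: for `y₁, …, y_n ∈ ℝ^d` with empirical
characteristic function `ψ_n(t) = (1/n) ∑_j exp(i⟨t, y_j⟩)`,
`n ∫ |ψ_n(t) - exp(-‖t‖²/2)|² φ(t) dt
  = (1/n) ∑_{j,k} [exp(-‖y_j-y_k‖²/2) - 2^{-d/2} exp(-‖y_j‖²/4)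
      - 2^{-d/2} exp(-‖y_k‖²/4) + 3^{-d/2}]`. -/
theorem bhep_v_statistic_representation (d n : ℕ) (hd : 1 ≤ d) (hn : 1 ≤ n)
    (y : Fin n → Fin d → ℝ) :
    (n : ℝ) * ∫ t : Fin d → ℝ,
        (‖((1 / (n : ℂ)) * ∑ j, Complex.exp (Complex.I * ((∑ i, t i * y j i : ℝ) : ℂ))
            - ((Real.exp (-(∑ i, t i ^ 2) / 2) : ℝ) : ℂ))‖) ^ 2 * gaussDensity d t
      = (1 / (n : ℝ)) * ∑ j, ∑ k,
          (Real.exp (-(∑ i, (y j i - y k i) ^ 2) / 2)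
            - (2 : ℝ) ^ (-(d : ℝ) / 2) * Real.exp (-(∑ i, y j i ^ 2) / 4)
            - (2 : ℝ) ^ (-(d : ℝ) / 2) * Real.exp (-(∑ i, y k i ^ 2) / 4)
            + (3 : ℝ) ^ (-(d : ℝ) / 2)) := by
  have hn' : (n : ℝ) ≠ 0 := by positivity
  have h1 : (0:ℝ) < 1 := one_pos
  have h2 : (0:ℝ) < 2 := two_pos
  have h3 : (0:ℝ) < 3 := by norm_num
  have hint : ∀ (j k : Fin n), Integrable (fun t : Fin d → ℝ =>
      gker d 1 (fun i => y j i - y k i) t - gker d 2 (y j) t - gker d 2 (y k) t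
        + gker d 3 (fun _ => 0) t) := fun j k =>
    (((integrable_gker d h1 _).sub (integrable_gker d h2 _)).sub
      (integrable_gker d h2 _)).add (integrable_gker d h3 _)
  have hstep : (∫ t : Fin d → ℝ,
        (‖((1 / (n : ℂ)) * ∑ j, Complex.exp (Complex.I * ((∑ i, t i * y j i : ℝ) : ℂ))
            - ((Real.exp (-(∑ i, t i ^ 2) / 2) : ℝ) : ℂ))‖) ^ 2 * gaussDensity d t)
      = (1 / (n : ℝ)^2) * ∑ j, ∑ k, ∫ t : Fin d → ℝ,
          (gker d 1 (fun i => y j i - y k i) t - gker d 2 (y j) t - gker d 2 (y k) t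
            + gker d 3 (fun _ => 0) t) := by
    simp_rw [pointwise_expand d n hn y]
    rw [MeasureTheory.integral_const_mul,
      MeasureTheory.integral_finset_sum _
        (fun j _ => integrable_finset_sum _ (fun k _ => hint j k))]
    congr 1
    exact Finset.sum_congr rfl fun j _ =>
      MeasureTheory.integral_finset_sum _ (fun k _ => hint j k)
  have hval : ∀ j k : Fin n,
      (∫ t : Fin d → ℝ,
        (gker d 1 (fun i => y j i - y k i) t - gker d 2 (y j) t - gker d 2 (y k) t
          + gker d 3 (fun _ => 0) t))
      = Real.exp (-(∑ i, (y j i - y k i) ^ 2) / 2)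
          - (2 : ℝ) ^ (-(d : ℝ) / 2) * Real.exp (-(∑ i, y j i ^ 2) / 4)
          - (2 : ℝ) ^ (-(d : ℝ) / 2) * Real.exp (-(∑ i, y k i ^ 2) / 4)
          + (3 : ℝ) ^ (-(d : ℝ) / 2) := by
    intro j k
    have ia : Integrable (fun t : Fin d → ℝ => gker d 1 (fun i => y j i - y k i) t
        - gker d 2 (y j) t) :=
      (integrable_gker d h1 _).sub (integrable_gker d h2 _)
    have ib : Integrable (fun t : Fin d → ℝ => gker d 1 (fun i => y j i - y k i) t
        - gker d 2 (y j) t - gker d 2 (y k) t) := ia.sub (integrable_gker d h2 _)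
    rw [MeasureTheory.integral_add ib (integrable_gker d h3 _),
      MeasureTheory.integral_sub ia (integrable_gker d h2 _),
      MeasureTheory.integral_sub (integrable_gker d h1 _) (integrable_gker d h2 _),
      integral_gker d h1, integral_gker d h2, integral_gker d h2, integral_gker d h3]
    norm_num [Real.one_rpow]
  rw [hstep]
  rw [Finset.sum_congr rfl fun j _ => Finset.sum_congr rfl fun k _ => hval j k]
  field_simp
end

section
/- Let d ≥ 1, n ≥ 1 and x₁, …, x_n ∈ ℝ^d with sample mean x̄ = (1/n)Σ_j x_j and sample covariance matrix S = (1/n)Σ_j (x_j - x̄)(x_j - x̄)ᵀ assumed positive definite. Define T_n(x₁,…,x_n) = n ∫_{ℝ^d} |(1/n) Σ_j exp(i⟨t, S^{-1/2}(x_j - x̄)⟩) - exp(-‖t‖²/2)|² φ(t) dt, where S^{-1/2} is the positive definite square root of S^{-1}. Then for every invertible real d×d matrix A and every b ∈ ℝ^d, the transformed sample Ax₁+b, …, Ax_n+b has positive definite sample covariance matrix ASAᵀ and T_n(Ax₁+b, …, Ax_n+b) = T_n(x₁, …, x_n); that is, the BHEP statistic is affine invariant. -/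
open MeasureTheory Real Matrix
open scoped Classical

/-- Sample mean `x̄ = (1/n) ∑_j x_j`. -/
noncomputable def sampleMean (d n : ℕ) (x : Fin n → Fin d → ℝ) : Fin d → ℝ :=
  (n : ℝ)⁻¹ • ∑ j, x j

/-- Sample covariance matrix `S = (1/n) ∑_j (x_j - x̄)(x_j - x̄)ᵀ`. -/
noncomputable def sampleCov (d n : ℕ) (x : Fin n → Fin d → ℝ) : Matrix (Fin d) (Fin d) ℝ :=
  (n : ℝ)⁻¹ • ∑ j, vecMulVec (x j - sampleMean d n x) (x j - sampleMean d n x)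

/-- The positive (semi)definite square root of `S⁻¹` (taking `0` if `S⁻¹` is not
positive semidefinite). -/
noncomputable def invSqrtCov (d n : ℕ) (x : Fin n → Fin d → ℝ) : Matrix (Fin d) (Fin d) ℝ :=
  if h : ((sampleCov d n x)⁻¹).PosSemidef then h.1.eigenvectorUnitary.1 * diagonal ((RCLike.ofReal : ℝ → ℝ) ∘ Real.sqrt ∘ h.1.eigenvalues) *
    (star h.1.eigenvectorUnitary : Matrix (Fin d) (Fin d) ℝ) else 0

/-- The BHEP test statistic
`T_n(x₁,…,x_n) = n ∫ |(1/n) ∑_j exp(i⟨t, S^{-1/2}(x_j - x̄)⟩) - exp(-‖t‖²/2)|² φ(t) dt`. -/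
noncomputable def bhepStat (d n : ℕ) (x : Fin n → Fin d → ℝ) : ℝ :=
  (n : ℝ) * ∫ t : Fin d → ℝ,
    (‖(1 / (n : ℂ)) * ∑ j, Complex.exp
        (Complex.I * ((∑ i, t i * (invSqrtCov d n x *ᵥ (x j - sampleMean d n x)) i : ℝ) : ℂ))
      - ((Real.exp (-(∑ i, t i ^ 2) / 2) : ℝ) : ℂ)‖) ^ 2 * gaussDensity d t

section Aux

variable {d n : ℕ}

lemma aux_vecMulVec (A : Matrix (Fin d) (Fin d) ℝ) (v : Fin d → ℝ) :
    vecMulVec (A *ᵥ v) (A *ᵥ v) = A * vecMulVec v v * Aᵀ := by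
  ext i k
  simp only [vecMulVec_apply, Matrix.mul_apply, mulVec, dotProduct, transpose_apply,
    Finset.sum_mul, Finset.mul_sum]
  congr 1; ext p; congr 1; ext q; ring

lemma aux_sampleMean (hn : 1 ≤ n) (x : Fin n → Fin d → ℝ)
    (A : Matrix (Fin d) (Fin d) ℝ) (b : Fin d → ℝ) :
    sampleMean d n (fun j => A *ᵥ x j + b) = A *ᵥ sampleMean d n x + b := by
  have hn' : (n : ℝ) ≠ 0 := Nat.cast_ne_zero.mpr (by omega)
  have hsum : ∑ j, (A *ᵥ x j + b) = A *ᵥ (∑ j, x j) + (n : ℝ) • b := by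
    rw [Finset.sum_add_distrib, Finset.sum_const, Finset.card_univ, Fintype.card_fin]
    congr 1
    · exact (map_sum A.mulVecLin x Finset.univ).symm
    · exact (Nat.cast_smul_eq_nsmul ℝ n b).symm
  rw [sampleMean, sampleMean, hsum, smul_add, smul_smul, inv_mul_cancel₀ hn', one_smul,
    ← Matrix.mulVec_smul]

lemma aux_sampleCov (hn : 1 ≤ n) (x : Fin n → Fin d → ℝ)
    (A : Matrix (Fin d) (Fin d) ℝ) (b : Fin d → ℝ) :
    sampleCov d n (fun j => A *ᵥ x j + b) = A * sampleCov d n x * Aᵀ := by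
  rw [sampleCov, sampleCov, aux_sampleMean hn x A b]
  have hdev : ∀ j : Fin n, (A *ᵥ x j + b) - (A *ᵥ sampleMean d n x + b)
      = A *ᵥ (x j - sampleMean d n x) := by
    intro j; rw [Matrix.mulVec_sub]; abel
  simp only [hdev, aux_vecMulVec]
  rw [Matrix.mul_smul, Matrix.smul_mul, Finset.mul_sum, Finset.sum_mul]

lemma aux_posDef (S A : Matrix (Fin d) (Fin d) ℝ) (hS : S.PosDef) (hA : IsUnit A.det) :
    (A * S * Aᵀ).PosDef := by
  have h := hS.mul_mul_conjTranspose_same (B := A) (Matrix.vecMul_injective_iff_isUnit.mpr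
    ((Matrix.isUnit_iff_isUnit_det A).mpr hA))
  rwa [conjTranspose_eq_transpose_of_trivial] at h

lemma aux_invSqrt_spec (x : Fin n → Fin d → ℝ) (hS : (sampleCov d n x).PosDef) :
    (invSqrtCov d n x).PosSemidef ∧
    invSqrtCov d n x * invSqrtCov d n x = (sampleCov d n x)⁻¹ := by
  have hps : ((sampleCov d n x)⁻¹).PosSemidef := hS.inv.posSemidef
  rw [invSqrtCov, dif_pos hps]
  set U := hps.1.eigenvectorUnitary
  have hD : (diagonal ((RCLike.ofReal : ℝ → ℝ) ∘ Real.sqrt ∘ hps.1.eigenvalues)).PosSemidef :=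
    PosSemidef.diagonal (fun i => Real.sqrt_nonneg _)
  refine ⟨?_, ?_⟩
  · have h := hD.mul_mul_conjTranspose_same U.1
    rwa [← star_eq_conjTranspose] at h
  · have hsp := hps.1.spectral_theorem
    rw [Unitary.conjStarAlgAut_apply] at hsp
    conv_rhs => rw [hsp]
    have hUU : (star U : Matrix (Fin d) (Fin d) ℝ) * U.1 = 1 := Unitary.coe_star_mul_self U
    calc U.1 * diagonal ((RCLike.ofReal : ℝ → ℝ) ∘ Real.sqrt ∘ hps.1.eigenvalues) *
          (star U : Matrix (Fin d) (Fin d) ℝ) *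
          (U.1 * diagonal ((RCLike.ofReal : ℝ → ℝ) ∘ Real.sqrt ∘ hps.1.eigenvalues) *
          (star U : Matrix (Fin d) (Fin d) ℝ))
        = U.1 * (diagonal ((RCLike.ofReal : ℝ → ℝ) ∘ Real.sqrt ∘ hps.1.eigenvalues) *
          ((star U : Matrix (Fin d) (Fin d) ℝ) * U.1) *
          diagonal ((RCLike.ofReal : ℝ → ℝ) ∘ Real.sqrt ∘ hps.1.eigenvalues)) *
          (star U : Matrix (Fin d) (Fin d) ℝ) := by simp only [Matrix.mul_assoc]
      _ = _ := by
          rw [hUU, Matrix.mul_one, diagonal_mul_diagonal]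
          congr 3
          funext i
          simp [Real.mul_self_sqrt (hps.eigenvalues_nonneg i)]

lemma aux_integral_orth (O : Matrix (Fin d) (Fin d) ℝ) (hdet : |O.det| = 1)
    (f : (Fin d → ℝ) → ℝ) :
    ∫ t, f (O *ᵥ t) = ∫ t, f t := by
  have h0 : O.det ≠ 0 := fun h => by simp [h] at hdet
  have hmp : MeasurePreserving (Matrix.toLin' O) volume volume := by
    refine ⟨(Matrix.toLin' O).continuous_of_finiteDimensional.measurable, ?_⟩
    rw [Real.map_matrix_volume_pi_eq_smul_volume_pi h0]
    simp [abs_inv, hdet]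
  have hinv : Invertible O := O.invertibleOfIsUnitDet (isUnit_iff_ne_zero.mpr h0)
  have hemb : MeasurableEmbedding (Matrix.toLin' O) :=
    (Matrix.toLinearEquiv' O hinv).toContinuousLinearEquiv.toHomeomorph.measurableEmbedding
  have h := hmp.integral_comp hemb f
  simpa [Matrix.toLin'_apply] using h

end Aux

set_option maxHeartbeats 2000000 in
/-- Affine invariance of the BHEP statistic: if the sample covariance `S` of `x₁,…,x_n` is
positive definite, then for every invertible `A` and every `b`, the transformed sample
`Ax_j + b` has sample covariance `A S Aᵀ`, which is positive definite, and
`T_n(Ax₁+b,…,Ax_n+b) = T_n(x₁,…,x_n)`. -/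
theorem bhep_affine_invariance (d n : ℕ) (hd : 1 ≤ d) (hn : 1 ≤ n)
    (x : Fin n → Fin d → ℝ) (hS : (sampleCov d n x).PosDef)
    (A : Matrix (Fin d) (Fin d) ℝ) (hA : IsUnit A.det) (b : Fin d → ℝ) :
    sampleCov d n (fun j => A *ᵥ x j + b) = A * sampleCov d n x * Aᵀ ∧
    (A * sampleCov d n x * Aᵀ).PosDef ∧
    bhepStat d n (fun j => A *ᵥ x j + b) = bhepStat d n x := by
  set S := sampleCov d n x with hSdef
  have hcov : sampleCov d n (fun j => A *ᵥ x j + b) = A * S * Aᵀ := aux_sampleCov hn x A b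
  have hpd' : (A * S * Aᵀ).PosDef := aux_posDef S A hS hA
  refine ⟨hcov, hpd', ?_⟩
  have hpdcov' : (sampleCov d n (fun j => A *ᵥ x j + b)).PosDef := by rw [hcov]; exact hpd'
  set C := invSqrtCov d n x with hCdef
  set B := invSqrtCov d n (fun j => A *ᵥ x j + b) with hBdef
  obtain ⟨hCps, hC2⟩ := aux_invSqrt_spec x hS
  obtain ⟨hBps, hB2⟩ := aux_invSqrt_spec _ hpdcov'
  rw [hcov] at hB2
  have hCt : Cᵀ = C := by
    have h := hCps.1; rwa [Matrix.IsHermitian, conjTranspose_eq_transpose_of_trivial] at h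
  have hBt : Bᵀ = B := by
    have h := hBps.1; rwa [Matrix.IsHermitian, conjTranspose_eq_transpose_of_trivial] at h
  have hSu : IsUnit S.det := isUnit_iff_ne_zero.mpr hS.det_pos.ne'
  have hS'u : IsUnit (A * S * Aᵀ).det := isUnit_iff_ne_zero.mpr hpd'.det_pos.ne'
  have hdetC : C.det ≠ 0 := by
    intro h
    have h' : (S⁻¹).det ≠ 0 := hS.inv.det_pos.ne'
    rw [← hC2, Matrix.det_mul, h, mul_zero] at h'
    exact h' rfl
  have hdetB : B.det ≠ 0 := by
    intro h
    have h' : ((A * S * Aᵀ)⁻¹).det ≠ 0 := hpd'.inv.det_pos.ne'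
    rw [← hB2, Matrix.det_mul, h, mul_zero] at h'
    exact h' rfl
  have hBu : IsUnit B.det := isUnit_iff_ne_zero.mpr hdetB
  have hCu : IsUnit C.det := isUnit_iff_ne_zero.mpr hdetC
  set O := B * A * C⁻¹ with hOdef
  have hOC : O * C = B * A := by
    rw [hOdef, Matrix.mul_assoc, Matrix.nonsing_inv_mul C hCu, Matrix.mul_one]
  have hOrth : O * Oᵀ = 1 := by
    have hCinvT : (C⁻¹)ᵀ = C⁻¹ := by rw [Matrix.transpose_nonsing_inv, hCt]
    have hOt : Oᵀ = C⁻¹ * (Aᵀ * B) := by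
      rw [hOdef, Matrix.transpose_mul, Matrix.transpose_mul, hCinvT, hBt]
    have hCC : C⁻¹ * C⁻¹ = S := by
      rw [← Matrix.mul_inv_rev, hC2, Matrix.nonsing_inv_nonsing_inv S hSu]
    have h1 : B * (B * (A * S * Aᵀ)) = 1 := by
      rw [← Matrix.mul_assoc, hB2, Matrix.nonsing_inv_mul _ hS'u]
    have h2 : B⁻¹ = B * (A * S * Aᵀ) := Matrix.inv_eq_right_inv h1
    have main : B * (A * S * Aᵀ) * B = 1 := by
      rw [← h2, Matrix.nonsing_inv_mul _ hBu]
    calc O * Oᵀ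
        = B * (A * ((C⁻¹ * C⁻¹) * (Aᵀ * B))) := by rw [hOt, hOdef]; simp only [Matrix.mul_assoc]
      _ = B * (A * S * Aᵀ) * B := by rw [hCC]; simp only [Matrix.mul_assoc]
      _ = 1 := main
  -- determinant of Oᵀ has absolute value 1
  have hdetO2 : O.det * O.det = 1 := by
    have h := congrArg Matrix.det hOrth
    rwa [Matrix.det_mul, Matrix.det_transpose, Matrix.det_one] at h
  have habsO : |O.det| = 1 := by
    rcases mul_self_eq_one_iff.mp hdetO2 with h | h <;> simp [h]
  have hdetOT : |Oᵀ.det| = 1 := by rwa [Matrix.det_transpose]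
  -- dot product identities
  have hdot : ∀ (w t : Fin d → ℝ), ∑ i, t i * (O *ᵥ w) i = ∑ i, (Oᵀ *ᵥ t) i * w i := by
    intro w t
    have h : t ⬝ᵥ (O *ᵥ w) = (Oᵀ *ᵥ t) ⬝ᵥ w := by
      rw [Matrix.dotProduct_mulVec, Matrix.mulVec_transpose]
    simpa [dotProduct] using h
  have hBA : ∀ (v t : Fin d → ℝ),
      ∑ i, t i * (B *ᵥ (A *ᵥ v)) i = ∑ i, (Oᵀ *ᵥ t) i * (C *ᵥ v) i := by
    intro v t
    rw [Matrix.mulVec_mulVec, ← hOC, ← Matrix.mulVec_mulVec]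
    exact hdot (C *ᵥ v) t
  have hnorm : ∀ t : Fin d → ℝ, ∑ i, (Oᵀ *ᵥ t) i ^ 2 = ∑ i, t i ^ 2 := by
    intro t
    have h := hdot (Oᵀ *ᵥ t) t
    rw [Matrix.mulVec_mulVec, hOrth, Matrix.one_mulVec] at h
    simpa [sq] using h.symm
  have hdev : ∀ j : Fin n, (A *ᵥ x j + b) - (A *ᵥ sampleMean d n x + b)
      = A *ᵥ (x j - sampleMean d n x) := by
    intro j; rw [Matrix.mulVec_sub]; abel
  -- main computation
  rw [bhepStat, bhepStat]
  refine congrArg (fun r => (n : ℝ) * r) ?_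
  rw [← aux_integral_orth Oᵀ hdetOT (fun t =>
    (‖(1 / (n : ℂ)) * ∑ j, Complex.exp
        (Complex.I * ((∑ i, t i * (C *ᵥ (x j - sampleMean d n x)) i : ℝ) : ℂ))
      - ((Real.exp (-(∑ i, t i ^ 2) / 2) : ℝ) : ℂ)‖) ^ 2 * gaussDensity d t)]
  refine integral_congr_ae (Filter.Eventually.of_forall fun t => ?_)
  simp only [aux_sampleMean hn x A b, hdev, Matrix.mulVec_mulVec]
  rw [← hOC]
  simp only [← Matrix.mulVec_mulVec]
  simp only [hdot, hnorm, gaussDensity]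
end

section
/- Let (X_j, W_j), j = 1, 2, …, be i.i.d. pairs where X_j is an ℝ^d-valued random vector with E X_1 = 0 and E‖X_1‖ < ∞, W_j is a Bernoulli random variable with q = P(W_1 = 1) > 0, and W_j is independent of X_j. Define the complete-case mean μ̂_n = (Σ_{j=1}^n W_j X_j) / (Σ_{j=1}^n W_j) whenever Σ_{j=1}^n W_j > 0 (and μ̂_n = 0 otherwise). Then √n ( μ̂_n - (1/(n q)) Σ_{j=1}^n W_j X_j ) converges to 0 in probability; that is, μ̂_n = (1/n) Σ_{j=1}^n (W_j/q) X_j + o_P(1/√n). -/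
open MeasureTheory ProbabilityTheory Filter Topology
open scoped ENNReal

lemma smul_tendstoInMeasure_zero {Ω : Type*} [MeasureSpace Ω]
    [IsProbabilityMeasure (volume : Measure Ω)]
    {E : Type*} [NormedAddCommGroup E] [NormedSpace ℝ E]
    (U : ℕ → Ω → ℝ) (V : ℕ → Ω → E) (C : ℝ)
    (hU : ∀ M : ℝ, 0 < M → ∀ n, volume {ω | M ≤ |U n ω|} ≤ ENNReal.ofReal (C / M ^ 2))
    (hV : TendstoInMeasure volume V atTop (fun _ => (0:E))) :
    TendstoInMeasure volume (fun n ω => U n ω • V n ω) atTop (fun _ => (0:E)) := by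
  rw [tendstoInMeasure_iff_dist] at hV ⊢
  intro ε hε
  rw [ENNReal.tendsto_atTop_zero]
  intro δ hδ
  set δ' : ℝ≥0∞ := min δ 1 with hδ'def
  have hδ'pos : 0 < δ' := lt_min hδ zero_lt_one
  have hδ'ne : δ' ≠ ⊤ := ne_top_of_le_ne_top ENNReal.one_ne_top (min_le_right _ _)
  set r : ℝ := δ'.toReal / 2 with hrdef
  have hr : 0 < r := by
    have := ENNReal.toReal_pos hδ'pos.ne' hδ'ne
    positivity
  set M : ℝ := Real.sqrt (C / r) + 1 with hMdef
  have hM : 0 < M := by positivity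
  have hCM : ENNReal.ofReal (C / M ^ 2) ≤ δ' / 2 := by
    have h1 : C / M ^ 2 ≤ r := by
      rcases le_or_gt C 0 with hC | hC
      · exact le_trans (div_nonpos_of_nonpos_of_nonneg hC (by positivity)) hr.le
      · have hsq : C / r ≤ M ^ 2 := by
          have h2 : Real.sqrt (C / r) ^ 2 = C / r := Real.sq_sqrt (by positivity)
          nlinarith [Real.sqrt_nonneg (C / r)]
        rw [div_le_iff₀ (by positivity)]
        calc C = (C / r) * r := by field_simp
        _ ≤ M ^ 2 * r := by nlinarith
        _ = r * M ^ 2 := by ring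
    calc ENNReal.ofReal (C / M ^ 2) ≤ ENNReal.ofReal r := ENNReal.ofReal_le_ofReal h1
    _ = δ' / 2 := by
        rw [hrdef, ENNReal.ofReal_div_of_pos (by norm_num), ENNReal.ofReal_toReal hδ'ne]
        norm_num
  have hεM : 0 < ε / M := by positivity
  obtain ⟨N, hN⟩ := ENNReal.tendsto_atTop_zero.mp (hV (ε / M) hεM) (δ' / 2)
    (ENNReal.div_pos hδ'pos.ne' ENNReal.ofNat_ne_top)
  refine ⟨N, fun n hn => ?_⟩
  have hsub : {ω | ε ≤ dist (U n ω • V n ω) ((fun _ => (0:E)) ω)} ⊆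
      {ω | M ≤ |U n ω|} ∪ {ω | ε / M ≤ dist (V n ω) ((fun _ => (0:E)) ω)} := by
    intro ω hω
    simp only [Set.mem_setOf_eq, dist_zero_right] at hω ⊢
    by_contra hcon
    simp only [Set.mem_union, Set.mem_setOf_eq, not_or, not_le, dist_zero_right] at hcon
    obtain ⟨h1, h2⟩ := hcon
    have : ‖U n ω • V n ω‖ < ε := by
      rw [norm_smul, Real.norm_eq_abs]
      calc |U n ω| * ‖V n ω‖ < M * (ε / M) :=
        mul_lt_mul'' h1 h2 (abs_nonneg _) (norm_nonneg _)
      _ = ε := by field_simp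
    exact absurd hω (not_le.2 this)
  calc volume {ω | ε ≤ dist (U n ω • V n ω) ((fun _ => (0:E)) ω)}
      ≤ volume ({ω | M ≤ |U n ω|} ∪ {ω | ε / M ≤ dist (V n ω) ((fun _ => (0:E)) ω)}) :=
        measure_mono hsub
    _ ≤ volume {ω | M ≤ |U n ω|} + volume {ω | ε / M ≤ dist (V n ω) ((fun _ => (0:E)) ω)} :=
        measure_union_le _ _
    _ ≤ δ' / 2 + δ' / 2 := add_le_add ((hU M hM n).trans hCM) (hN n hn)
    _ = δ' := ENNReal.add_halves _
    _ ≤ δ := min_le_left _ _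


/-- The complete-case sample mean: `μ̂_n = (∑_{j<n} W_j X_j)/(∑_{j<n} W_j)` when
`∑_{j<n} W_j > 0`, and `0` otherwise. -/
noncomputable def ccMean {Ω : Type*} [MeasureSpace Ω] {d : ℕ}
    (X : ℕ → Ω → EuclideanSpace ℝ (Fin d)) (W : ℕ → Ω → ℝ) (n : ℕ) (ω : Ω) :
    EuclideanSpace ℝ (Fin d) :=
  if 0 < ∑ j ∈ Finset.range n, W j ω then
    (∑ j ∈ Finset.range n, W j ω)⁻¹ • ∑ j ∈ Finset.range n, W j ω • X j ω
  else 0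

/-- Asymptotic expansion of the complete-case mean (De Wet–Randles condition (2.10)):
for i.i.d. pairs `(X_j, W_j)` with `E X₁ = 0`, `E‖X₁‖ < ∞`, `W_j` Bernoulli with
`q = P(W₁ = 1) > 0` and `W_j` independent of `X_j`,
`√n (μ̂_n - (1/(nq)) ∑_{j≤n} W_j X_j) → 0` in probability. -/
theorem ccMean_expansion {Ω : Type*} [MeasureSpace Ω]
    [IsProbabilityMeasure (volume : Measure Ω)] {d : ℕ} (hd : 1 ≤ d)
    (X : ℕ → Ω → EuclideanSpace ℝ (Fin d)) (W : ℕ → Ω → ℝ)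
    (hXmeas : ∀ j, Measurable (X j)) (hWmeas : ∀ j, Measurable (W j))
    (hW01 : ∀ j ω, W j ω = 0 ∨ W j ω = 1)
    (hiid : iIndepFun (fun j ω => (X j ω, W j ω)) volume)
    (hident : ∀ j, IdentDistrib (fun ω => (X j ω, W j ω)) (fun ω => (X 0 ω, W 0 ω))
      volume volume)
    (hindep : ∀ j, IndepFun (X j) (W j) volume)
    (hint : Integrable (X 0) volume)
    (hmean : ∫ ω, X 0 ω = 0)
    (q : ℝ) (hqdef : q = (volume {ω | W 0 ω = 1}).toReal) (hq : 0 < q) :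
    TendstoInMeasure volume
      (fun (n : ℕ) (ω : Ω) => Real.sqrt (n : ℝ) •
        (ccMean X W n ω - ((n * q)⁻¹) • ∑ j ∈ Finset.range n, W j ω • X j ω))
      atTop (fun _ => (0 : EuclideanSpace ℝ (Fin d))) := by
  classical
  set T : ℕ → Ω → ℝ := fun n ω => ∑ j ∈ Finset.range n, W j ω with hTdef
  set S : ℕ → Ω → EuclideanSpace ℝ (Fin d) := fun n ω => ∑ j ∈ Finset.range n, W j ω • X j ω with hSdef
  set Y : ℕ → Ω → EuclideanSpace ℝ (Fin d) := fun j ω => W j ω • X j ω with hYdef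
  -- basic facts about W
  have hW0le : ∀ j ω, (0:ℝ) ≤ W j ω := fun j ω => by
    rcases hW01 j ω with h | h <;> simp [h]
  have hWabs : ∀ j ω, ‖W j ω‖ ≤ 1 := fun j ω => by
    rcases hW01 j ω with h | h <;> simp [h]
  have hWident : ∀ j, IdentDistrib (W j) (W 0) volume volume := fun j =>
    (hident j).comp measurable_snd
  have hWmem : ∀ j, MemLp (W j) 2 volume := fun j =>
    MemLp.of_bound (hWmeas j).aestronglyMeasurable 1 (ae_of_all _ (hWabs j))
  have hWint : ∀ j, Integrable (W j) volume := fun j => (hWmem j).integrable one_le_two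
  have hEW : ∫ ω, W 0 ω = q := by
    have hind : ∀ ω, W 0 ω = Set.indicator {ω | W 0 ω = 1} (fun _ => (1:ℝ)) ω := by
      intro ω
      rcases hW01 0 ω with h | h
      · rw [Set.indicator_of_notMem, h]
        simp only [Set.mem_setOf_eq, h]
        norm_num
      · rw [Set.indicator_of_mem, h]
        exact h
    have hms : MeasurableSet {ω | W 0 ω = 1} := (hWmeas 0) (measurableSet_singleton 1)
    rw [hqdef]
    calc ∫ ω, W 0 ω = ∫ ω, Set.indicator {ω | W 0 ω = 1} (fun _ => (1:ℝ)) ω :=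
        integral_congr_ae (ae_of_all _ hind)
    _ = (volume {ω | W 0 ω = 1}).toReal := by
        rw [integral_indicator_const (1:ℝ) hms]; simp [measureReal_def]
  -- independence
  have hWiid : iIndepFun W volume := by
    have := hiid.comp (fun _ => (Prod.snd : EuclideanSpace ℝ (Fin d) × ℝ → ℝ)) (fun _ => measurable_snd)
    exact this
  have hWpair : Pairwise (Function.onFun (IndepFun · · volume) W) := fun i j hij => hWiid.indepFun hij
  have hYmeas : ∀ j, Measurable (Y j) := fun j => (hWmeas j).smul (hXmeas j)
  have hYiid : iIndepFun Y volume := by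
    have := hiid.comp (fun _ => (fun p : EuclideanSpace ℝ (Fin d) × ℝ => p.2 • p.1))
      (fun _ => measurable_snd.smul measurable_fst)
    exact this
  have hYpair : Pairwise (Function.onFun (IndepFun · · volume) Y) := fun i j hij => hYiid.indepFun hij
  have hYident : ∀ j, IdentDistrib (Y j) (Y 0) volume volume := fun j =>
    (hident j).comp (measurable_snd.smul measurable_fst)
  have hYint : Integrable (Y 0) volume := by
    refine Integrable.mono hint (hYmeas 0).aestronglyMeasurable (ae_of_all _ fun ω => ?_)
    rw [hYdef]
    simp only [norm_smul]
    calc ‖W 0 ω‖ * ‖X 0 ω‖ ≤ 1 * ‖X 0 ω‖ :=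
      mul_le_mul_of_nonneg_right (hWabs 0 ω) (norm_nonneg _)
    _ = ‖X 0 ω‖ := one_mul _
  -- mean of Y 0 is 0
  have hEY : ∫ ω, Y 0 ω = 0 := by
    have hproj : ∀ i : Fin d, Integrable (fun ω => X 0 ω i) volume := fun i =>
      (EuclideanSpace.proj (𝕜 := ℝ) i).integrable_comp hint
    ext i
    show (∫ ω, Y 0 ω) i = 0
    have h1 : (∫ ω, Y 0 ω) i = ∫ ω, ((fun ω => X 0 ω i) * W 0) ω := by
      have h2 := (EuclideanSpace.proj (𝕜 := ℝ) i).integral_comp_comm hYint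
      have h3 : ∀ ω, (EuclideanSpace.proj (𝕜 := ℝ) i) (Y 0 ω) = ((fun ω => X 0 ω i) * W 0) ω := by
        intro ω
        simp [hYdef, mul_comm]
      have h2' : (∫ ω, Y 0 ω) i = (EuclideanSpace.proj (𝕜 := ℝ) i) (∫ ω, Y 0 ω) := rfl
      rw [h2', ← h2]
      exact integral_congr_ae (ae_of_all _ h3)
    have hindep' : IndepFun (fun ω => X 0 ω i) (W 0) volume := by
      have := (hindep 0).comp (φ := fun v : EuclideanSpace ℝ (Fin d) =>
        (EuclideanSpace.proj (𝕜 := ℝ) i) v) (ψ := id)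
        (EuclideanSpace.proj (𝕜 := ℝ) i).measurable measurable_id
      exact this
    have h4 : ∫ ω, X 0 ω i = 0 := by
      have h5 := (EuclideanSpace.proj (𝕜 := ℝ) i).integral_comp_comm hint
      rw [hmean] at h5
      simpa using h5
    rw [h1, hindep'.integral_mul_eq_mul_integral (hproj i).aestronglyMeasurable (hWint 0).aestronglyMeasurable, h4, zero_mul]
  -- strong laws
  have hasW : ∀ᵐ ω, Tendsto (fun n : ℕ => (n:ℝ)⁻¹ * T n ω) atTop (𝓝 q) := by
    have := strong_law_ae W (hWint 0) hWpair hWident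
    filter_upwards [this] with ω hω
    rw [hEW] at hω
    simpa [smul_eq_mul, hTdef] using hω
  have hasY : ∀ᵐ ω, Tendsto (fun n : ℕ => (n:ℝ)⁻¹ • S n ω) atTop (𝓝 0) := by
    have := strong_law_ae Y hYint hYpair hYident
    filter_upwards [this] with ω hω
    rw [hEY] at hω
    exact hω
  -- the two factors
  set U : ℕ → Ω → ℝ := fun n ω => ((n:ℝ) * q - T n ω) / Real.sqrt n with hUdef
  set V : ℕ → Ω → EuclideanSpace ℝ (Fin d) := fun n ω => (((n:ℝ)⁻¹ * T n ω) * q)⁻¹ • ((n:ℝ)⁻¹ • S n ω) with hVdef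
  -- key pointwise identity
  have key : ∀ (n : ℕ) (ω : Ω), Real.sqrt (n:ℝ) •
      (ccMean X W n ω - ((n * q:ℝ)⁻¹) • S n ω) = U n ω • V n ω := by
    intro n ω
    have hcc : ccMean X W n ω = if 0 < T n ω then (T n ω)⁻¹ • S n ω else 0 := rfl
    rcases Nat.eq_zero_or_pos n with hn | hn
    · subst hn
      simp [hUdef, Real.sqrt_zero]
    · have hn0 : (n:ℝ) ≠ 0 := Nat.cast_ne_zero.2 hn.ne'
      have hnpos : (0:ℝ) < (n:ℝ) := Nat.cast_pos.2 hn
      have hsn : Real.sqrt (n:ℝ) * Real.sqrt (n:ℝ) = (n:ℝ) := Real.mul_self_sqrt hnpos.le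
      have hs0 : Real.sqrt (n:ℝ) ≠ 0 := ne_of_gt (Real.sqrt_pos.2 hnpos)
      by_cases hT : 0 < T n ω
      · have hT0 : T n ω ≠ 0 := ne_of_gt hT
        rw [hcc, if_pos hT, ← sub_smul, smul_smul]
        simp only [hUdef, hVdef, smul_smul]
        congr 1
        generalize Real.sqrt (n:ℝ) = s at hsn hs0
        rw [← hsn]
        field_simp
      · have hTnn : (0:ℝ) ≤ T n ω := Finset.sum_nonneg fun j _ => hW0le j ω
        have hT0 : T n ω = 0 := le_antisymm (not_lt.1 hT) hTnn
        have hWz : ∀ j ∈ Finset.range n, W j ω = 0 :=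
          (Finset.sum_eq_zero_iff_of_nonneg (fun j _ => hW0le j ω)).1 hT0
        have hS0 : S n ω = 0 := Finset.sum_eq_zero fun j hj => by
          rw [hWz j hj, zero_smul]
        rw [hcc, if_neg hT]
        simp [hUdef, hVdef, hS0, hT0]
  -- convergence of V in measure
  have hVtend : TendstoInMeasure volume V atTop (fun _ => (0 : EuclideanSpace ℝ (Fin d))) := by
    have hTmeas : ∀ n, Measurable (T n) := fun n =>
      Finset.measurable_sum _ fun j _ => hWmeas j
    have hSmeas : ∀ n, Measurable (S n) := fun n =>
      Finset.measurable_sum _ fun j _ => hYmeas j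
    have hVmeas : ∀ n, AEStronglyMeasurable (V n) volume := by
      intro n
      refine Measurable.aestronglyMeasurable ?_
      exact (((measurable_const.mul (hTmeas n)).mul measurable_const).inv).smul
        (by exact (hSmeas n).const_smul ((n:ℝ)⁻¹))
    refine tendstoInMeasure_of_tendsto_ae hVmeas ?_
    filter_upwards [hasW, hasY] with ω h1 h2
    have hqq : q * q ≠ 0 := by positivity
    have hc : Tendsto (fun n : ℕ => (((n:ℝ)⁻¹ * T n ω) * q)⁻¹) atTop (𝓝 ((q*q)⁻¹)) :=
      (h1.mul_const q).inv₀ hqq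
    have h3 := hc.smul h2
    rw [smul_zero] at h3
    exact h3
  -- uniform tail bound on U
  have hUbound : ∀ M : ℝ, 0 < M → ∀ n,
      volume {ω | M ≤ |U n ω|} ≤ ENNReal.ofReal (variance (W 0) volume / M ^ 2) := by
    intro M hM n
    rcases Nat.eq_zero_or_pos n with hn | hn
    · subst hn
      have hemp : {ω | M ≤ |U 0 ω|} = (∅ : Set Ω) := by
        ext ω
        simp [hUdef, Real.sqrt_zero, not_le, hM]
      rw [hemp, measure_empty]
      exact zero_le
    · have hnpos : (0:ℝ) < (n:ℝ) := Nat.cast_pos.2 hn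
      have hs : (0:ℝ) < Real.sqrt n := Real.sqrt_pos.2 hnpos
      have hmemT : MemLp (T n) 2 volume := by
        have := memLp_finset_sum' (Finset.range n) (fun j (_ : j ∈ Finset.range n) => hWmem j)
        have heq : (∑ j ∈ Finset.range n, W j) = T n := by
          funext ω
          simp [hTdef, Finset.sum_apply]
        rwa [heq] at this
      have hET : ∫ ω, T n ω = (n:ℝ) * q := by
        calc ∫ ω, T n ω = ∑ j ∈ Finset.range n, ∫ ω, W j ω :=
            integral_finset_sum _ (fun j _ => hWint j)
        _ = ∑ _j ∈ Finset.range n, q := Finset.sum_congr rfl fun j _ => by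
            rw [(hWident j).integral_eq, hEW]
        _ = (n:ℝ) * q := by simp [mul_comm]
      have hVarT : variance (T n) volume = (n:ℝ) * variance (W 0) volume := by
        have hvs := IndepFun.variance_sum (μ := volume) (X := W) (s := Finset.range n)
          (fun j _ => hWmem j) (hWpair.set_pairwise _)
        have heq : (∑ j ∈ Finset.range n, W j) = T n := by
          funext ω
          simp [hTdef, Finset.sum_apply]
        rw [heq] at hvs
        rw [hvs]
        calc ∑ j ∈ Finset.range n, variance (W j) volume
            = ∑ _j ∈ Finset.range n, variance (W 0) volume :=
              Finset.sum_congr rfl fun j _ => (hWident j).variance_eq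
        _ = (n:ℝ) * variance (W 0) volume := by simp [mul_comm]
      have hcheb := meas_ge_le_variance_div_sq (μ := volume) hmemT
        (c := M * Real.sqrt n) (by positivity)
      have hsub : {ω | M ≤ |U n ω|} ⊆
          {ω | M * Real.sqrt n ≤ |T n ω - ∫ ω, T n ω|} := by
        intro ω hω
        simp only [Set.mem_setOf_eq, hUdef] at hω ⊢
        rw [hET, abs_sub_comm]
        rw [abs_div, abs_of_nonneg (Real.sqrt_nonneg (n:ℝ))] at hω
        calc M * Real.sqrt n ≤ |(n:ℝ) * q - T n ω| / Real.sqrt n * Real.sqrt n :=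
            mul_le_mul_of_nonneg_right hω hs.le
        _ = |(n:ℝ) * q - T n ω| := div_mul_cancel₀ _ hs.ne'
      have harith : variance (T n) volume / (M * Real.sqrt n) ^ 2 =
          variance (W 0) volume / M ^ 2 := by
        rw [hVarT, mul_pow, Real.sq_sqrt hnpos.le]
        field_simp
      calc volume {ω | M ≤ |U n ω|}
          ≤ volume {ω | M * Real.sqrt n ≤ |T n ω - ∫ ω, T n ω|} := measure_mono hsub
      _ ≤ ENNReal.ofReal (variance (T n) volume / (M * Real.sqrt n) ^ 2) := hcheb
      _ = ENNReal.ofReal (variance (W 0) volume / M ^ 2) := by rw [harith]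
  have := smul_tendstoInMeasure_zero U V (variance (W 0) volume) hUbound hVtend
  have heq : (fun (n : ℕ) (ω : Ω) => Real.sqrt (n : ℝ) •
      (ccMean X W n ω - ((n * q:ℝ)⁻¹) • ∑ j ∈ Finset.range n, W j ω • X j ω)) =
      fun n ω => U n ω • V n ω := funext fun n => funext fun ω => key n ω
  rw [heq]
  exact this
end
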